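/- Let G be a 2-connected graph and F a set of edges of G such that G/F is a cactus T, with associated T-witness structure W. If t is a cut-vertex of T, then the witness set W(t) contains at least two vertices. -/

import Mathlib

/-! If the witness set of `t` were a single vertex `x`, then `G - x` would contract onto
`T - t`: every edge of `G - x` either stays inside a witness set or becomes an edge of
`T - t`, and every vertex of `T - t` has a preimage. Since `G` is 2-connected, `G - x` is
connected, hence so is `T - t`, and `t` is not a cut-vertex. -/

open SimpleGraph

universe u v

/-- A cactus: a connected graph in which every edge lies on at most one cycle
(any two cycles through a common edge have the same edge set). -/
def IsCactus {V : Type u} (G : SimpleGraph V) : Prop :=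
  G.Connected ∧ ∀ (e : Sym2 V) (a b : V) (c₁ : G.Walk a a) (c₂ : G.Walk b b),
    c₁.IsCycle → c₂.IsCycle → e ∈ c₁.edges → e ∈ c₂.edges →
    {e' | e' ∈ c₁.edges} = {e' | e' ∈ c₂.edges}

/-- The graph `G/F` obtained by contracting the edges of `F`: its vertices are the
connected components of the subgraph spanned by the edges of `F` that lie in `G`. -/
def contract {V : Type u} (G : SimpleGraph V) (F : Set (Sym2 V)) :
    SimpleGraph (SimpleGraph.fromEdgeSet F ⊓ G).ConnectedComponent where
  Adj a b := a ≠ b ∧ ∃ x y : V, G.Adj x y ∧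
      (SimpleGraph.fromEdgeSet F ⊓ G).connectedComponentMk x = a ∧
      (SimpleGraph.fromEdgeSet F ⊓ G).connectedComponentMk y = b
  symm := by
    constructor
    rintro a b ⟨hne, x, y, hadj, hx, hy⟩
    exact ⟨hne.symm, y, x, hadj.symm, hy, hx⟩
  loopless := by
    constructor
    rintro a ⟨hne, -⟩
    exact hne rfl

/-- A cut-vertex of `G`: removing it disconnects the graph. -/
def IsCutVertex {V : Type u} (G : SimpleGraph V) (x : V) : Prop :=
  ¬ (G.induce ({x}ᶜ : Set V)).Connected

/-- 2-connected: connected, at least 3 vertices, no cut-vertex. -/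
def TwoConnected {V : Type u} (G : SimpleGraph V) : Prop :=
  G.Connected ∧ 3 ≤ Nat.card V ∧ ∀ x : V, (G.induce ({x}ᶜ : Set V)).Connected

/-- A cable path: a path whose internal vertices are adjacent exactly to their
two neighbours on the path. -/
def IsCablePath {V : Type u} (G : SimpleGraph V) (l : List V) : Prop :=
  l ≠ [] ∧ l.Nodup ∧ l.Chain' G.Adj ∧
  ∀ (i : ℕ) (h2 : i + 1 < l.length) (_h1 : 1 ≤ i) (y : V),
    G.Adj (l.get ⟨i, by omega⟩) y ↔
      (y = l.get ⟨i - 1, by omega⟩ ∨ y = l.get ⟨i + 1, h2⟩)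

/-- `G` is contractible to `H` via `ψ`: preimages are connected witness sets and
`H`-adjacency corresponds to existence of crossing edges of `G`. -/
def IsContraction {V : Type u} {W : Type v} (G : SimpleGraph V) (H : SimpleGraph W)
    (ψ : V → W) : Prop :=
  Function.Surjective ψ ∧
  (∀ t : W, (G.induce (ψ ⁻¹' {t})).Connected) ∧
  (∀ t t' : W, H.Adj t t' ↔ t ≠ t' ∧ ∃ x y : V, G.Adj x y ∧ ψ x = t ∧ ψ y = t')

/-- The witness set of `t` is big: it contains at least two vertices. -/
def BigWitness {V : Type u} {W : Type v} (ψ : V → W) (t : W) : Prop :=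
  ∃ a b : V, a ≠ b ∧ ψ a = t ∧ ψ b = t

/-- A 3-colouring `f` of `V(G)` is compatible with the `T`-witness structure given by `ψ`:
witness sets are monochromatic, adjacent big witness sets get distinct colours, and
endpoints of cable paths in `T` between two big witness sets through singleton witness
sets are coloured differently from their path-neighbours. -/
def Compatible {V : Type u} {W : Type v} (T : SimpleGraph W) (ψ : V → W)
    (f : V → Fin 3) : Prop :=
  (∀ x y : V, ψ x = ψ y → f x = f y) ∧
  (∀ t t' : W, BigWitness ψ t → BigWitness ψ t' → T.Adj t t' →
    ∀ x y : V, ψ x = t → ψ y = t' → f x ≠ f y) ∧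
  (∀ l : List W, IsCablePath T l → ∀ (hlen : 3 ≤ l.length),
    BigWitness ψ (l.get ⟨0, by omega⟩) →
    BigWitness ψ (l.get ⟨l.length - 1, by omega⟩) →
    (∀ (i : ℕ) (h : i < l.length), 1 ≤ i → i < l.length - 1 →
      ¬ BigWitness ψ (l.get ⟨i, h⟩)) →
    ((∀ x y : V, ψ x = l.get ⟨0, by omega⟩ → ψ y = l.get ⟨1, by omega⟩ → f x ≠ f y) ∧
     (∀ x y : V, ψ x = l.get ⟨l.length - 1, by omega⟩ →
        ψ y = l.get ⟨l.length - 2, by omega⟩ → f x ≠ f y)))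

/-- The graph `G - Z`, seen as a graph on all of `V`: edges of `G` avoiding `Z`. -/
def restrictOutside {V : Type u} (G : SimpleGraph V) (Z : Set V) : SimpleGraph V where
  Adj x y := G.Adj x y ∧ x ∉ Z ∧ y ∉ Z
  symm := by constructor; rintro x y ⟨h, hx, hy⟩; exact ⟨h.symm, hy, hx⟩
  loopless := by constructor; rintro x ⟨h, -, -⟩; exact (G.ne_of_adj h) rfl

/-- `Z` is a core of `G`: every connected component of `G - Z` is an isolated vertex
or (the vertex set of) a cable path of `G`. -/
def IsCore {V : Type u} (G : SimpleGraph V) (Z : Set V) : Prop :=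
  ∀ x ∉ Z, {u | (restrictOutside G Z).Reachable x u} = {x} ∨
    ∃ l : List V, IsCablePath G l ∧
      {u | (restrictOutside G Z).Reachable x u} = {u | u ∈ l}

/-- A connected core. -/
def IsConnectedCore {V : Type u} (G : SimpleGraph V) (Z : Set V) : Prop :=
  (G.induce Z).Connected ∧ IsCore G Z

/-- `B` induces a nonempty connected subgraph without cut-vertices. -/
def NoCutVertexSet {V : Type u} (G : SimpleGraph V) (B : Set V) : Prop :=
  B.Nonempty ∧ (G.induce B).Connected ∧
  ∀ x ∈ B, (B \ {x}).Nonempty → (G.induce (B \ {x})).Connected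

/-- A block of `G`: a maximal set inducing a connected subgraph without cut-vertices. -/
def IsBlock {V : Type u} (G : SimpleGraph V) (B : Set V) : Prop :=
  NoCutVertexSet G B ∧ ∀ B' : Set V, B ⊆ B' → NoCutVertexSet G B' → B = B'

/-- `B` is the vertex set of an induced cycle of `G`. -/
def IsCycleSet {V : Type u} (G : SimpleGraph V) (B : Set V) : Prop :=
  ∃ (a : V) (c : G.Walk a a), c.IsCycle ∧ {x | x ∈ c.support} = B ∧
    ∀ x ∈ B, ∀ y ∈ B, G.Adj x y → s(x, y) ∈ c.edges

/-- `G` can be turned into a cactus by contracting at most `k` edges. -/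
def KContractibleToCactus {V : Type u} (G : SimpleGraph V) (k : ℕ) : Prop :=
  ∃ F : Set (Sym2 V), F ⊆ G.edgeSet ∧ F.ncard ≤ k ∧ IsCactus (contract G F)

/-- `G` has a tree decomposition of width at most `w`. -/
def HasTreewidthAtMost {V : Type u} (G : SimpleGraph V) (w : ℕ) : Prop :=
  ∃ (ι : Type u) (T : SimpleGraph ι) (β : ι → Set V),
    T.Connected ∧ T.IsAcyclic ∧
    (∀ x : V, ∃ i, x ∈ β i) ∧
    (∀ ⦃x y : V⦄, G.Adj x y → ∃ i, x ∈ β i ∧ y ∈ β i) ∧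
    (∀ (x : V) (i j : ι), x ∈ β i → x ∈ β j →
      ∀ p : T.Walk i j, p.IsPath → ∀ z ∈ p.support, x ∈ β z) ∧
    (∀ i, (β i).ncard ≤ w + 1)

namespace SimpleGraph

variable {V : Type u} {W : Type v} {G : SimpleGraph V} {H : SimpleGraph W}

theorem Reachable.of_adj_imp_eq_or_adj (f : V → W)
    (hf : ∀ ⦃a b⦄, G.Adj a b → f a = f b ∨ H.Adj (f a) (f b)) {a b : V}
    (h : G.Reachable a b) : H.Reachable (f a) (f b) := by
  rw [reachable_iff_reflTransGen] at h ⊢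
  refine Relation.ReflTransGen.lift' f (fun a b hab => ?_) _ _ h
  show Relation.ReflTransGen H.Adj (f a) (f b)
  rcases hf hab with heq | hadj
  · exact heq ▸ .refl
  · exact .single hadj

theorem Connected.of_surjective_of_adj_imp_eq_or_adj (f : V → W) (hs : f.Surjective)
    (hf : ∀ ⦃a b⦄, G.Adj a b → f a = f b ∨ H.Adj (f a) (f b)) (hG : G.Connected) :
    H.Connected where
  preconnected := hs.forall₂.mpr fun a b => (hG a b).of_adj_imp_eq_or_adj f hf
  nonempty := hG.nonempty.map f

end SimpleGraph

theorem contract_eq_or_adj_of_adj {V : Type u} {G : SimpleGraph V} (F : Set (Sym2 V))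
    {x y : V} (h : G.Adj x y) :
    (fromEdgeSet F ⊓ G).connectedComponentMk x = (fromEdgeSet F ⊓ G).connectedComponentMk y ∨
      (contract G F).Adj ((fromEdgeSet F ⊓ G).connectedComponentMk x)
        ((fromEdgeSet F ⊓ G).connectedComponentMk y) :=
  (em _).imp_right fun hne => ⟨hne, x, y, h, rfl, rfl⟩

theorem contract_induce_compl_connected_of_singleton_witness {V : Type u} {G : SimpleGraph V}
    (F : Set (Sym2 V)) {x : V}
    (hx : ∀ y, (fromEdgeSet F ⊓ G).connectedComponentMk y =
      (fromEdgeSet F ⊓ G).connectedComponentMk x → y = x)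
    (hGx : (G.induce ({x}ᶜ : Set V)).Connected) :
    ((contract G F).induce ({(fromEdgeSet F ⊓ G).connectedComponentMk x}ᶜ : Set _)).Connected := by
  set mk := (fromEdgeSet F ⊓ G).connectedComponentMk
  let f (y : ({x}ᶜ : Set V)) : ({mk x}ᶜ : Set _) := ⟨mk y, fun hy => y.2 (hx y hy)⟩
  refine hGx.of_surjective_of_adj_imp_eq_or_adj f ?_
    fun a b hab => (contract_eq_or_adj_of_adj F hab).imp Subtype.ext id
  rintro ⟨s, hs⟩
  obtain ⟨y, rfl⟩ := s.exists_rep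
  exact ⟨⟨y, fun hyx => hs (hyx ▸ rfl)⟩, rfl⟩

theorem stmt4_general {V : Type u} (G : SimpleGraph V) (hG : TwoConnected G)
    (F : Set (Sym2 V))
    (t : (SimpleGraph.fromEdgeSet F ⊓ G).ConnectedComponent)
    (ht : IsCutVertex (contract G F) t) :
    ∃ a b : V, a ≠ b ∧
      (SimpleGraph.fromEdgeSet F ⊓ G).connectedComponentMk a = t ∧
      (SimpleGraph.fromEdgeSet F ⊓ G).connectedComponentMk b = t := by
  obtain ⟨x, rfl⟩ := t.exists_rep
  by_contra! hsingle
  have hx (y : V) (hy : (fromEdgeSet F ⊓ G).connectedComponentMk y =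
      (fromEdgeSet F ⊓ G).connectedComponentMk x) : y = x :=
    by_contra fun hne => hsingle y x hne hy rfl
  exact ht (contract_induce_compl_connected_of_singleton_witness F hx (hG.2.2 x))

/-- If `G` is 2-connected and `G/F` is a cactus, then the witness set of any cut-vertex
of `G/F` contains at least two vertices. -/
theorem stmt4 {V : Type u} (G : SimpleGraph V) (hG : TwoConnected G)
    (F : Set (Sym2 V)) (hF : F ⊆ G.edgeSet) (hT : IsCactus (contract G F))
    (t : (SimpleGraph.fromEdgeSet F ⊓ G).ConnectedComponent)
    (ht : IsCutVertex (contract G F) t) :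
    ∃ a b : V, a ≠ b ∧
      (SimpleGraph.fromEdgeSet F ⊓ G).connectedComponentMk a = t ∧
      (SimpleGraph.fromEdgeSet F ⊓ G).connectedComponentMk b = t :=
  stmt4_general G hG F t ht
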